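/- For each T > 0 there exists a constant C = C_T > 0 such that for all t ∈ [0,T] the function (x,y) ↦ λ_x(y,t) is C-Lipschitz on [0,1]², i.e. |λ_x(y,t) − λ_{x′}(y′,t)| ≤ C·(|x − x′| + |y − y′|) for all (x,y), (x′,y′) ∈ [0,1]². -/

import Mathlib

/-- The rescaled rate `λ_x(y,t)`. -/
noncomputable def lam (x y t : ℝ) : ℝ :=
  if t = 0 then (1 / 2 : ℝ) * y * (x - y)
  else if x = 0 then (1 / t) * (-y + (1 - Real.exp (-t * y)) / t)
  else (1 / t) * (-y + x * Real.exp (t * x) * (1 - Real.exp (-t * y)) / (Real.exp (t * x) - 1))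

open Real

lemma expos {s : ℝ} (hs : 0 < s) : 1 < Real.exp s := by
  nlinarith [Real.add_one_le_exp s]

lemma expub {s : ℝ} : (1 - s) * Real.exp s ≤ 1 := by
  have h := Real.add_one_le_exp (-s)
  rw [Real.exp_neg] at h
  have hp : (0:ℝ) < Real.exp s := Real.exp_pos s
  have h2 := mul_le_mul_of_nonneg_right h hp.le
  rw [inv_mul_cancel₀ hp.ne'] at h2
  linarith

lemma g_sub_one {s : ℝ} (hs : 0 < s) : |s * Real.exp s / (Real.exp s - 1) - 1| ≤ s := by
  have h1 : 1 < Real.exp s := expos hs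
  have h2 : 1 + s ≤ Real.exp s := by linarith [Real.add_one_le_exp s]
  have h3 := expub (s := s)
  rw [abs_le]
  constructor
  · rw [div_sub' (by linarith : Real.exp s - 1 ≠ 0), le_div_iff₀ (by linarith)]
    nlinarith
  · rw [div_sub' (by linarith : Real.exp s - 1 ≠ 0), div_le_iff₀ (by linarith)]
    nlinarith

lemma g_deriv {s : ℝ} (hs : 0 < s) :
    HasDerivAt (fun u => u * Real.exp u / (Real.exp u - 1))
      (((Real.exp s + s * Real.exp s) * (Real.exp s - 1) - s * Real.exp s * Real.exp s) / (Real.exp s - 1)^2) s := by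
  have h1 : 1 < Real.exp s := expos hs
  have hnum : HasDerivAt (fun u : ℝ => u * Real.exp u) (Real.exp s + s * Real.exp s) s := by
    have := (hasDerivAt_id s).mul (Real.hasDerivAt_exp s)
    exact this.congr_deriv (by simp)
  have hden : HasDerivAt (fun u : ℝ => Real.exp u - 1) (Real.exp s) s :=
    (Real.hasDerivAt_exp s).sub_const 1
  have := hnum.div hden (by linarith)
  exact this

lemma g_lip {a b : ℝ} (ha : 0 < a) (hb : 0 < b) :
    |a * Real.exp a / (Real.exp a - 1) - b * Real.exp b / (Real.exp b - 1)| ≤ |a - b| := by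
  have key := Convex.norm_image_sub_le_of_norm_hasDerivWithin_le
    (f := fun u => u * Real.exp u / (Real.exp u - 1))
    (f' := fun u => ((Real.exp u + u * Real.exp u) * (Real.exp u - 1) - u * Real.exp u * Real.exp u) / (Real.exp u - 1)^2)
    (C := 1) (s := Set.Ioi (0:ℝ))
    (fun u hu => (g_deriv hu).hasDerivWithinAt)
    (fun u hu => by
      have h1 : 1 < Real.exp u := expos hu
      have h2 : 1 + u ≤ Real.exp u := by linarith [Real.add_one_le_exp u]
      have h3 := expub (s := u)
      have hden : (0:ℝ) < (Real.exp u - 1)^2 := by nlinarith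
      rw [Real.norm_eq_abs, abs_le]
      constructor
      · rw [le_div_iff₀ hden]; nlinarith
      · rw [div_le_one hden]; nlinarith)
    (convex_Ioi 0) hb ha
  simpa [Real.norm_eq_abs] using key

noncomputable def Bv (x t : ℝ) : ℝ :=
  if x = 0 then 1 / t else x * Real.exp (t * x) / (Real.exp (t * x) - 1)

lemma lam_eq (x y t : ℝ) (ht : t ≠ 0) :
    lam x y t = -y / t + Bv x t * ((1 - Real.exp (-t * y)) / t) := by
  unfold lam Bv
  rw [if_neg ht]
  by_cases hx : x = 0 <;> simp [hx] <;> ring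

lemma Bv_eq {x t : ℝ} (hx : 0 < x) (ht : 0 < t) :
    Bv x t = (t * x * Real.exp (t * x) / (Real.exp (t * x) - 1)) / t := by
  have h1 : 1 < Real.exp (t * x) := expos (by positivity)
  unfold Bv
  rw [if_neg hx.ne', eq_div_iff ht.ne']
  field_simp

lemma Bv_lip0 {x t : ℝ} (hx : 0 < x) (ht : 0 < t) : |Bv x t - 1 / t| ≤ x := by
  rw [Bv_eq hx ht, div_sub_div_same, abs_div, abs_of_pos ht, div_le_iff₀ ht]
  calc |t * x * Real.exp (t * x) / (Real.exp (t * x) - 1) - 1|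
      ≤ t * x := g_sub_one (by positivity)
    _ = x * t := by ring

lemma Bv_lip {x x' t : ℝ} (ht : 0 < t) (hx : 0 ≤ x) (hx' : 0 ≤ x') :
    |Bv x t - Bv x' t| ≤ |x - x'| := by
  rcases eq_or_lt_of_le hx with h | h
  · rcases eq_or_lt_of_le hx' with h' | h'
    · simp [← h, ← h']
    · rw [← h, show Bv 0 t = 1 / t from if_pos rfl, abs_sub_comm, zero_sub, abs_neg,
        abs_of_nonneg hx']
      exact Bv_lip0 h' ht
  · rcases eq_or_lt_of_le hx' with h' | h'
    · rw [← h', show Bv 0 t = 1 / t from if_pos rfl, sub_zero, abs_of_pos h]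
      exact Bv_lip0 h ht
    · rw [Bv_eq h ht, Bv_eq h' ht, div_sub_div_same, abs_div, abs_of_pos ht, div_le_iff₀ ht]
      calc |t * x * Real.exp (t * x) / (Real.exp (t * x) - 1) -
            t * x' * Real.exp (t * x') / (Real.exp (t * x') - 1)|
          ≤ |t * x - t * x'| := g_lip (by positivity) (by positivity)
        _ = |x - x'| * t := by
            rw [show t * x - t * x' = t * (x - x') by ring, abs_mul, abs_of_pos ht, mul_comm]

lemma F_bounds {y t : ℝ} (ht : 0 < t) (hy0 : 0 ≤ y) :
    0 ≤ (1 - Real.exp (-t * y)) / t ∧ (1 - Real.exp (-t * y)) / t ≤ y := by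
  have h1 : Real.exp (-t * y) ≤ 1 := Real.exp_le_one_iff.mpr (by nlinarith)
  have h2 : 1 - t * y ≤ Real.exp (-t * y) := by
    have := Real.add_one_le_exp (-t * y); linarith
  constructor
  · apply div_nonneg (by linarith) ht.le
  · rw [div_le_iff₀ ht]; nlinarith

lemma lipx {x x' y t : ℝ} (ht : 0 < t) (hy : y ∈ Set.Icc (0:ℝ) 1)
    (hx : 0 ≤ x) (hx' : 0 ≤ x') :
    |lam x y t - lam x' y t| ≤ |x - x'| := by
  rw [lam_eq x y t ht.ne', lam_eq x' y t ht.ne']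
  have hF := F_bounds ht hy.1
  calc |(-y / t + Bv x t * ((1 - Real.exp (-t * y)) / t)) -
        (-y / t + Bv x' t * ((1 - Real.exp (-t * y)) / t))|
      = |Bv x t - Bv x' t| * |(1 - Real.exp (-t * y)) / t| := by
        rw [← abs_mul]; ring_nf
    _ ≤ |x - x'| * 1 := by
        apply mul_le_mul (Bv_lip ht hx hx') _ (abs_nonneg _) (abs_nonneg _)
        rw [abs_of_nonneg hF.1]; linarith [hy.2, hF.2]
    _ = |x - x'| := mul_one _

lemma tBv_bounds {x t : ℝ} (ht : 0 < t) (hx : 0 ≤ x) :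
    1 ≤ t * Bv x t ∧ t * Bv x t ≤ 1 + t * x := by
  rcases eq_or_lt_of_le hx with h | h
  · rw [← h, show Bv 0 t = 1 / t from if_pos rfl, mul_one_div, div_self ht.ne']
    constructor <;> nlinarith
  · have hg := g_sub_one (s := t * x) (by positivity)
    rw [abs_le] at hg
    have : t * Bv x t = t * x * Real.exp (t * x) / (Real.exp (t * x) - 1) := by
      rw [Bv_eq h ht, mul_div_cancel₀ _ ht.ne']
    rw [this]
    have h1 : 1 < Real.exp (t * x) := expos (by positivity)
    constructor
    · rw [le_div_iff₀ (by linarith)]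
      nlinarith [expub (s := t * x)]
    · linarith [hg.2]

lemma lipy {x y y' t : ℝ} (ht : 0 < t) (hx : x ∈ Set.Icc (0:ℝ) 1)
    (hy : y ∈ Set.Icc (0:ℝ) 1) (hy' : y' ∈ Set.Icc (0:ℝ) 1) :
    |lam x y t - lam x y' t| ≤ |y - y'| := by
  have hc := tBv_bounds ht hx.1
  have hd : ∀ u : ℝ, HasDerivAt (fun v => -v / t + Bv x t * ((1 - Real.exp (-t * v)) / t))
      (-1 / t + Bv x t * Real.exp (-t * u)) u := by
    intro u
    have h1 : HasDerivAt (fun v : ℝ => -t * v) (-t) u := by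
      simpa using (hasDerivAt_id u).const_mul (-t)
    have h2 := h1.exp
    have h3 : HasDerivAt (fun v : ℝ => (1 - Real.exp (-t * v)) / t)
        ((0 - Real.exp (-t * u) * -t) / t) u :=
      ((hasDerivAt_const u (1:ℝ)).sub h2).div_const t
    have h4 := h3.const_mul (Bv x t)
    have h5 : HasDerivAt (fun v : ℝ => -v / t) (-1 / t) u := by
      simpa using ((hasDerivAt_id u).neg).div_const t
    have h6 := h5.add h4
    refine h6.congr_deriv ?_
    rw [zero_sub, mul_neg, neg_neg, mul_div_assoc, div_self ht.ne', mul_one]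
  have key := Convex.norm_image_sub_le_of_norm_hasDerivWithin_le
    (f := fun v => -v / t + Bv x t * ((1 - Real.exp (-t * v)) / t))
    (f' := fun u => -1 / t + Bv x t * Real.exp (-t * u)) (C := 1) (s := Set.Icc (0:ℝ) 1)
    (fun u _ => (hd u).hasDerivWithinAt)
    (fun u hu => by
      have hE1 : Real.exp (-t * u) ≤ 1 := Real.exp_le_one_iff.mpr (by nlinarith [hu.1])
      have hE2 : 1 - t * u ≤ Real.exp (-t * u) := by
        have := Real.add_one_le_exp (-t * u); linarith
      have hE0 : 0 < Real.exp (-t * u) := Real.exp_pos _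
      rw [Real.norm_eq_abs]
      show |(-1 / t + Bv x t * Real.exp (-t * u))| ≤ 1
      rw [show -1 / t + Bv x t * Real.exp (-t * u) = (t * Bv x t * Real.exp (-t * u) - 1) / t from by
          field_simp; ring,
        abs_div, abs_of_pos ht, div_le_one ht, abs_le]
      constructor
      · nlinarith [hc.1, hu.2]
      · nlinarith [hc.2, hx.2, mul_nonneg (mul_nonneg ht.le hx.1) (sub_nonneg.mpr hE1)])
    (convex_Icc 0 1) hy' hy
  rw [lam_eq x y t ht.ne', lam_eq x y' t ht.ne']
  simpa [Real.norm_eq_abs] using key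

lemma lip0 {x y x' y' : ℝ} (hx : x ∈ Set.Icc (0:ℝ) 1) (hy : y ∈ Set.Icc (0:ℝ) 1)
    (hx' : x' ∈ Set.Icc (0:ℝ) 1) (hy' : y' ∈ Set.Icc (0:ℝ) 1) :
    |(1 / 2 : ℝ) * y * (x - y) - (1 / 2 : ℝ) * y' * (x' - y')| ≤ 2 * (|x - x'| + |y - y'|) := by
  obtain ⟨hx0, hx1⟩ := hx; obtain ⟨hy0, hy1⟩ := hy
  obtain ⟨hx0', hx1'⟩ := hx'; obtain ⟨hy0', hy1'⟩ := hy'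
  have ha1 := le_abs_self (x - x'); have ha2 := neg_abs_le (x - x')
  have hb1 := le_abs_self (y - y'); have hb2 := neg_abs_le (y - y')
  rw [abs_le]
  constructor <;> nlinarith [abs_nonneg (x - x'), abs_nonneg (y - y'),
    mul_le_mul_of_nonneg_left hb1 hx0, mul_le_mul_of_nonneg_left hb2 hx0,
    mul_le_mul_of_nonneg_left ha1 hy0', mul_le_mul_of_nonneg_left ha2 hy0',
    mul_le_mul_of_nonneg_left hb1 (by linarith : (0:ℝ) ≤ y + y'),
    mul_le_mul_of_nonneg_left hb2 (by linarith : (0:ℝ) ≤ y + y')]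

theorem stmt4 (T : ℝ) (hT : 0 < T) :
    ∃ C : ℝ, 0 < C ∧ ∀ t ∈ Set.Icc (0 : ℝ) T, ∀ x y x' y' : ℝ,
      x ∈ Set.Icc (0 : ℝ) 1 → y ∈ Set.Icc (0 : ℝ) 1 →
      x' ∈ Set.Icc (0 : ℝ) 1 → y' ∈ Set.Icc (0 : ℝ) 1 →
      |lam x y t - lam x' y' t| ≤ C * (|x - x'| + |y - y'|) := by
  refine ⟨2, by norm_num, fun t htT x y x' y' hx hy hx' hy' => ?_⟩
  rcases eq_or_lt_of_le htT.1 with ht | ht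
  · rw [← ht]
    simpa [lam] using lip0 hx hy hx' hy'
  · calc |lam x y t - lam x' y' t|
        ≤ |lam x y t - lam x' y t| + |lam x' y t - lam x' y' t| := abs_sub_le _ _ _
      _ ≤ |x - x'| + |y - y'| :=
          add_le_add (lipx ht hy hx.1 hx'.1) (lipy ht hx' hy hy')
      _ ≤ 2 * (|x - x'| + |y - y'|) := by
          nlinarith [abs_nonneg (x - x'), abs_nonneg (y - y')]
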